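/- Let U, U* ∈ ℝ^{d₁×r}, V, V* ∈ ℝ^{d₂×r} with M* = U*V*ᵀ and balanced optimal factors U*ᵀU* = V*ᵀV*, let ε ≥ 0, and suppose (U, V) satisfies the stationarity conditions (UVᵀ − M*)V = 0, (UVᵀ − M*)ᵀU = 0 and the balancedness bound ‖UᵀU − VᵀV‖_F ≤ ε. Let R ∈ ℝ^{r×r} be orthogonal, set Δ_U = U − U*R, Δ_V = V − V*R, and let W, W*, Δ be the vertical stackings of (U,V), (U*,V*), (Δ_U,Δ_V) respectively. If moreover ‖ΔΔᵀ‖_F² ≤ 2‖WWᵀ − W*W*ᵀ‖_F² (which holds when R is chosen as the orthogonal matrix minimizing ‖W − W*R‖_F), then ‖U Δ_Vᵀ + Δ_U Vᵀ‖_F² ≤ ‖UVᵀ − M*‖_F² + ε²/2. -/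

import Mathlib

/-!
With `E = UVᵀ − M*`, rotation invariance of `M* = (U*R)(V*R)ᵀ` gives
`UΔ_Vᵀ + Δ_UVᵀ = E + Δ_UΔ_Vᵀ`, and stationarity makes `E` orthogonal to the left-hand side, so
`‖UΔ_Vᵀ + Δ_UVᵀ‖² = ‖Δ_UΔ_Vᵀ‖² − ‖E‖²`. The off-diagonal blocks of `ΔΔᵀ` give
`4‖Δ_UΔ_Vᵀ‖² ≤ ‖ΔΔᵀ‖²`, while expanding the diagonal blocks of `WWᵀ − W*W*ᵀ` with the
balancedness of `(U*, V*)` gives `‖WWᵀ − W*W*ᵀ‖² ≤ 4‖E‖² + ‖UᵀU − VᵀV‖²`. Combining these with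
`‖ΔΔᵀ‖² ≤ 2‖WWᵀ − W*W*ᵀ‖²` yields the bound.
-/

open Matrix

noncomputable def frob {m n : Type*} [Fintype m] [Fintype n] (A : Matrix m n ℝ) : ℝ :=
  Real.sqrt (∑ i, ∑ j, A i j ^ 2)

theorem fromBlocks_sub {l m n o α : Type*} [Sub α] (A A' : Matrix m o α) (B B' : Matrix m l α)
    (C C' : Matrix n o α) (D D' : Matrix n l α) :
    fromBlocks A B C D - fromBlocks A' B' C' D' = fromBlocks (A - A') (B - B') (C - C') (D - D') := by
  ext (i | i) (j | j) <;> rfl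

section FrobSq

variable {l m n o : Type*} [Fintype l] [Fintype m] [Fintype n] [Fintype o]
  {α : Type*} [CommRing α]

def frobSq (A : Matrix m n α) : α := trace (Aᵀ * A)

theorem trace_transpose_mul_comm (A B : Matrix m n α) : trace (Aᵀ * B) = trace (Bᵀ * A) := by
  rw [← trace_transpose, transpose_mul, transpose_transpose]

theorem frobSq_sub (A B : Matrix m n α) :
    frobSq (A - B) = frobSq A - 2 * trace (Aᵀ * B) + frobSq B := by
  simp only [frobSq, transpose_sub, Matrix.sub_mul, Matrix.mul_sub, trace_sub,
    trace_transpose_mul_comm B A]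
  ring

theorem frobSq_transpose (A : Matrix m n α) : frobSq Aᵀ = frobSq A := by
  rw [frobSq, frobSq, transpose_transpose, trace_mul_comm]

theorem frobSq_fromBlocks (A : Matrix m o α) (B : Matrix m l α) (C : Matrix n o α)
    (D : Matrix n l α) :
    frobSq (fromBlocks A B C D) = frobSq A + frobSq B + frobSq C + frobSq D := by
  simp only [frobSq, fromBlocks_transpose, fromBlocks_multiply, trace, diag,
    Fintype.sum_sum_type, fromBlocks_apply₁₁, fromBlocks_apply₂₂, Matrix.add_apply,
    Finset.sum_add_distrib]
  ring

theorem trace_mul_transpose_inner (X : Matrix m o α) (Y : Matrix n o α) (Z : Matrix m l α)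
    (W : Matrix n l α) : trace ((X * Yᵀ)ᵀ * (Z * Wᵀ)) = trace ((Xᵀ * Z)ᵀ * (Yᵀ * W)) := by
  rw [← trace_transpose ((X * Yᵀ)ᵀ * (Z * Wᵀ))]
  simp only [transpose_mul, transpose_transpose, Matrix.mul_assoc]
  rw [trace_mul_comm]
  simp only [Matrix.mul_assoc]

theorem frobSq_mul_transpose (X : Matrix m o α) (Y : Matrix n o α) :
    frobSq (X * Yᵀ) = trace ((Xᵀ * X)ᵀ * (Yᵀ * Y)) :=
  trace_mul_transpose_inner X Y X Y

theorem frobSq_mul_transpose_self (X : Matrix m o α) : frobSq (X * Xᵀ) = frobSq (Xᵀ * X) :=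
  frobSq_mul_transpose X X

omit [Fintype m] [Fintype n] in
theorem fromRows_mul_transpose_fromRows (X : Matrix m o α) (Y : Matrix n o α) :
    fromRows X Y * (fromRows X Y)ᵀ = fromBlocks (X * Xᵀ) (X * Yᵀ) (Y * Xᵀ) (Y * Yᵀ) := by
  rw [transpose_fromRows, fromRows_mul_fromCols]

theorem frobSq_gram_fromRows_sub (U Us : Matrix m o α) (V Vs : Matrix n o α) :
    frobSq (fromRows U V * (fromRows U V)ᵀ - fromRows Us Vs * (fromRows Us Vs)ᵀ)
      = frobSq (U * Uᵀ - Us * Usᵀ) + 2 * frobSq (U * Vᵀ - Us * Vsᵀ)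
        + frobSq (V * Vᵀ - Vs * Vsᵀ) := by
  have hswap : V * Uᵀ - Vs * Usᵀ = (U * Vᵀ - Us * Vsᵀ)ᵀ := by
    simp only [transpose_sub, transpose_mul, transpose_transpose]
  rw [fromRows_mul_transpose_fromRows, fromRows_mul_transpose_fromRows, fromBlocks_sub,
    frobSq_fromBlocks, hswap, frobSq_transpose]
  ring

theorem frobSq_fromRows_mul_transpose (X : Matrix m o α) (Y : Matrix n o α) :
    frobSq (fromRows X Y * (fromRows X Y)ᵀ)
      = frobSq (Xᵀ * X) + 2 * frobSq (X * Yᵀ) + frobSq (Yᵀ * Y) := by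
  have hswap : Y * Xᵀ = (X * Yᵀ)ᵀ := by rw [transpose_mul, transpose_transpose]
  rw [fromRows_mul_transpose_fromRows, frobSq_fromBlocks, hswap, frobSq_transpose,
    frobSq_mul_transpose_self, frobSq_mul_transpose_self]
  ring

/-- For balanced factors `Usᵀ Us = Vsᵀ Vs`, the diagonal blocks of `WWᵀ − W*W*ᵀ` are controlled
by the off-diagonal block and the imbalance of `(U, V)`. -/
theorem frobSq_gram_sub_add_eq_of_balanced (U Us : Matrix m o α) (V Vs : Matrix n o α)
    (hbal : Usᵀ * Us = Vsᵀ * Vs) :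
    frobSq (U * Uᵀ - Us * Usᵀ) + frobSq (V * Vᵀ - Vs * Vsᵀ) + 2 * frobSq (Uᵀ * Us - Vᵀ * Vs)
      = 2 * frobSq (U * Vᵀ - Us * Vsᵀ) + frobSq (Uᵀ * U - Vᵀ * V) := by
  simp only [frobSq_sub, frobSq_mul_transpose, trace_mul_transpose_inner, hbal]
  simp only [frobSq]
  ring

omit [Fintype m] [Fintype n] in
theorem mul_transpose_sub_eq_of_mul_transpose_eq_one (U Us : Matrix m o α) (V Vs : Matrix n o α)
    [DecidableEq o] {R : Matrix o o α} (hR : R * Rᵀ = 1) :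
    U * (V - Vs * R)ᵀ + (U - Us * R) * Vᵀ
      = (U * Vᵀ - Us * Vsᵀ) + (U - Us * R) * (V - Vs * R)ᵀ := by
  have hrot : Us * R * (Vs * R)ᵀ = Us * Vsᵀ := by
    rw [transpose_mul, Matrix.mul_assoc, ← Matrix.mul_assoc R, hR, Matrix.one_mul]
  simp only [transpose_sub, Matrix.mul_sub, Matrix.sub_mul, hrot]
  abel

theorem trace_transpose_mul_eq_zero_of_stationary (E : Matrix m n α) (U : Matrix m o α)
    (V : Matrix n o α) (h₁ : E * V = 0) (h₂ : Eᵀ * U = 0) (Y : Matrix n o α)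
    (Z : Matrix m o α) : trace (Eᵀ * (U * Yᵀ + Z * Vᵀ)) = 0 := by
  have hU : trace (Eᵀ * (U * Yᵀ)) = 0 := by
    rw [← Matrix.mul_assoc, h₂, Matrix.zero_mul, trace_zero]
  have hV : trace (Eᵀ * (Z * Vᵀ)) = 0 := by
    rw [trace_mul_cycle', ← Matrix.mul_assoc, ← transpose_mul, h₁, transpose_zero,
      Matrix.zero_mul, trace_zero]
  rw [Matrix.mul_add, trace_add, hU, hV, add_zero]

end FrobSq

section Real

variable {m n o : Type*} [Fintype m] [Fintype n] [Fintype o]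

theorem frob_sq (A : Matrix m n ℝ) : frob A ^ 2 = frobSq A := by
  rw [frob, Real.sq_sqrt (by positivity), frobSq, trace, Finset.sum_comm]
  simp only [diag, mul_apply, transpose_apply, sq]

theorem frobSq_nonneg (A : Matrix m n ℝ) : 0 ≤ frobSq A := by
  rw [← frob_sq]; positivity

theorem two_mul_trace_le_frobSq_add (A B : Matrix m n ℝ) :
    2 * trace (Aᵀ * B) ≤ frobSq A + frobSq B := by
  linarith [frobSq_nonneg (A - B), frobSq_sub A B]

theorem four_mul_frobSq_mul_transpose_le (X : Matrix m o ℝ) (Y : Matrix n o ℝ) :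
    4 * frobSq (X * Yᵀ) ≤ frobSq (fromRows X Y * (fromRows X Y)ᵀ) := by
  rw [frobSq_fromRows_mul_transpose, frobSq_mul_transpose]
  linarith [two_mul_trace_le_frobSq_add (Xᵀ * X) (Yᵀ * Y)]

theorem frobSq_gram_fromRows_sub_le_of_balanced (U Us : Matrix m o ℝ) (V Vs : Matrix n o ℝ)
    (hbal : Usᵀ * Us = Vsᵀ * Vs) :
    frobSq (fromRows U V * (fromRows U V)ᵀ - fromRows Us Vs * (fromRows Us Vs)ᵀ)
      ≤ 4 * frobSq (U * Vᵀ - Us * Vsᵀ) + frobSq (Uᵀ * U - Vᵀ * V) := by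
  rw [frobSq_gram_fromRows_sub]
  linarith [frobSq_gram_sub_add_eq_of_balanced U Us V Vs hbal, frobSq_nonneg (Uᵀ * Us - Vᵀ * Vs)]

end Real

theorem hessian_cross_term_bound_general {d₁ d₂ r : ℕ}
    (U Us : Matrix (Fin d₁) (Fin r) ℝ) (V Vs : Matrix (Fin d₂) (Fin r) ℝ)
    (ε : ℝ)
    (hbalopt : Usᵀ * Us = Vsᵀ * Vs)
    (hstat₁ : (U * Vᵀ - Us * Vsᵀ) * V = 0)
    (hstat₂ : (U * Vᵀ - Us * Vsᵀ)ᵀ * U = 0)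
    (hbal : frob (Uᵀ * U - Vᵀ * V) ≤ ε)
    (R : Matrix (Fin r) (Fin r) ℝ) (hR : R * Rᵀ = 1)
    (DU : Matrix (Fin d₁) (Fin r) ℝ) (DV : Matrix (Fin d₂) (Fin r) ℝ)
    (hDU : DU = U - Us * R) (hDV : DV = V - Vs * R)
    (hkey : frob (fromRows DU DV * (fromRows DU DV)ᵀ) ^ 2
              ≤ 2 * frob (fromRows U V * (fromRows U V)ᵀ
                          - fromRows Us Vs * (fromRows Us Vs)ᵀ) ^ 2) :
    frob (U * DVᵀ + DU * Vᵀ) ^ 2 ≤ frob (U * Vᵀ - Us * Vsᵀ) ^ 2 + ε ^ 2 / 2 := by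
  set E := U * Vᵀ - Us * Vsᵀ
  set T := U * DVᵀ + DU * Vᵀ
  have hT : T = E + DU * DVᵀ := by
    simp only [T, E, hDU, hDV, mul_transpose_sub_eq_of_mul_transpose_eq_one U Us V Vs hR]
  have horth : trace (Tᵀ * E) = 0 := by
    rw [trace_transpose_mul_comm]
    exact trace_transpose_mul_eq_zero_of_stationary E U V hstat₁ hstat₂ DV DU
  have hpyth : frobSq T + frobSq E = frobSq (DU * DVᵀ) := by
    rw [show DU * DVᵀ = T - E by rw [hT]; abel, frobSq_sub T E, horth]
    ring
  have himbalance : frobSq (Uᵀ * U - Vᵀ * V) ≤ ε ^ 2 := by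
    rw [← frob_sq]
    exact pow_le_pow_left₀ (Real.sqrt_nonneg _) hbal 2
  rw [frob_sq, frob_sq] at hkey ⊢
  linarith [four_mul_frobSq_mul_transpose_le DU DV,
    frobSq_gram_fromRows_sub_le_of_balanced U Us V Vs hbalopt]

/-- At a stationary point `(U,V)` of `½‖UVᵀ − M*‖_F²` with `M* = U*V*ᵀ`, balanced
optimal factors `U*ᵀU* = V*ᵀV*`, balancedness `‖UᵀU − VᵀV‖_F ≤ ε`, orthogonal `R`,
`Δ_U = U − U*R`, `Δ_V = V − V*R`, and `‖ΔΔᵀ‖_F² ≤ 2‖WWᵀ − W*W*ᵀ‖_F²`, one has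
`‖UΔ_Vᵀ + Δ_UVᵀ‖_F² ≤ ‖UVᵀ − M*‖_F² + ε²/2`. -/
theorem hessian_cross_term_bound {d₁ d₂ r : ℕ}
    (U Us : Matrix (Fin d₁) (Fin r) ℝ) (V Vs : Matrix (Fin d₂) (Fin r) ℝ)
    (ε : ℝ) (hε : 0 ≤ ε)
    (hbalopt : Usᵀ * Us = Vsᵀ * Vs)
    (hstat₁ : (U * Vᵀ - Us * Vsᵀ) * V = 0)
    (hstat₂ : (U * Vᵀ - Us * Vsᵀ)ᵀ * U = 0)
    (hbal : frob (Uᵀ * U - Vᵀ * V) ≤ ε)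
    (R : Matrix (Fin r) (Fin r) ℝ) (hR : R * Rᵀ = 1)
    (DU : Matrix (Fin d₁) (Fin r) ℝ) (DV : Matrix (Fin d₂) (Fin r) ℝ)
    (hDU : DU = U - Us * R) (hDV : DV = V - Vs * R)
    (hkey : frob (fromRows DU DV * (fromRows DU DV)ᵀ) ^ 2
              ≤ 2 * frob (fromRows U V * (fromRows U V)ᵀ
                          - fromRows Us Vs * (fromRows Us Vs)ᵀ) ^ 2) :
    frob (U * DVᵀ + DU * Vᵀ) ^ 2 ≤ frob (U * Vᵀ - Us * Vsᵀ) ^ 2 + ε ^ 2 / 2 :=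
  hessian_cross_term_bound_general U Us V Vs ε hbalopt hstat₁ hstat₂ hbal R hR DU DV hDU hDV hkey
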